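/- arXiv:2605.00388 — 2 statements merged into one kernel-verified Lean document; each statement's English description precedes it below -/
import Mathlib

section
/- (Theorem 3.3.4.) Assume the MPEC setup with f, F continuously differentiable and g twice continuously differentiable, Z = {(x,y) ∈ ℝ^{n+m} : Gx + Hy + a ≤ 0} for G ∈ ℝ^{s×n}, H ∈ ℝ^{s×m}, a ∈ ℝ^s, and let z̄ = (x̄, ȳ) ∈ 𝓕. Assume SBCQ holds at z̄ and the full CQ holds at z̄, i.e., T(z̄; 𝓕) = 𝓛(z̄; 𝓕). Then z̄ is a stationary point of the MPEC if and only if for every λ ∈ M(z̄) and every partition of I₀(z̄, λ) := {i ∈ 𝓘(z̄) : λ_i = 0} into two index sets α and ᾱ, there exist ζ ∈ ℝ^s, η ∈ ℝ^ℓ, π ∈ ℝ^m such that: ∇_x f(z̄) + Gᵀζ + ∇_x g(z̄)ᵀη = ∇_x L(z̄, λ)ᵀπ; ∇_y f(z̄) + Hᵀζ + ∇_y g(z̄)ᵀη = ∇_y L(z̄, λ)ᵀπ; ⟨π, ∇_y g_i(z̄)⟩ ≤ 0 for all i ∈ α; ⟨π, ∇_y g_i(z̄)⟩ = 0 for all i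 ∈ I₊(z̄, λ) := {i ∈ 𝓘(z̄) : λ_i > 0}; η_i ≥ 0 for all i ∈ ᾱ; η_i = 0 for all i ∉ 𝓘(z̄); ζ ≥ 0 and ζᵀ(Gx̄ + Hȳ + a) = 0. -/
open Filter Topology BigOperators

noncomputable section

/-- Vectors in `ℝ^n`. -/
abbrev Vec (n : ℕ) := Fin n → ℝ

/-- Euclidean inner product on `ℝ^n`. -/
def dotp {n : ℕ} (a b : Vec n) : ℝ := ∑ i, a i * b i

/-- The tangent cone to `S` at `z`: all `d` such that there exist points `zs k ∈ S`
with `zs k → z` and scalars `ts k ↓ 0` with `(zs k - z) / ts k → d`. -/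
def tangentCone {E : Type*} [NormedAddCommGroup E] [NormedSpace ℝ E]
    (S : Set E) (z : E) : Set E :=
  {d | ∃ (zs : ℕ → E) (ts : ℕ → ℝ),
    (∀ k, zs k ∈ S) ∧ Tendsto zs atTop (𝓝 z) ∧
    (∀ k, 0 < ts k) ∧ Tendsto ts atTop (𝓝 0) ∧
    Tendsto (fun k => (ts k)⁻¹ • (zs k - z)) atTop (𝓝 d)}

variable {n m l : ℕ}

/-- Lower-level feasible set `C(x) = {y : g(x,y) ≤ 0}`. -/
def lowerC (g : Vec n × Vec m → Vec l) (x : Vec n) : Set (Vec m) :=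
  {y | ∀ i, g (x, y) i ≤ 0}

/-- Lower-level VI solution set `S(x) = SOL(F(x,·), C(x))`. -/
def lowerS (F : Vec n × Vec m → Vec m) (g : Vec n × Vec m → Vec l)
    (x : Vec n) : Set (Vec m) :=
  {y | y ∈ lowerC g x ∧ ∀ v ∈ lowerC g x, 0 ≤ dotp (F (x, y)) (v - y)}

/-- The MPEC feasible set `𝓕 = {(x,y) ∈ Z : y ∈ S(x)}`. -/
def feasSet (F : Vec n × Vec m → Vec m) (g : Vec n × Vec m → Vec l)
    (Z : Set (Vec n × Vec m)) : Set (Vec n × Vec m) :=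
  {z | z ∈ Z ∧ z.2 ∈ lowerS F g z.1}

/-- `j`-th component of the gradient `∇_y g_i(z)`. -/
def gradYg (g : Vec n × Vec m → Vec l) (i : Fin l) (z : Vec n × Vec m) : Vec m :=
  fun j => fderiv ℝ (fun p => g p i) z (0, Pi.single j 1)

/-- `⟨∇_x g_i(z̄), dx⟩`, expressed via the Fréchet derivative in the `x`-slot. -/
def dgX (g : Vec n × Vec m → Vec l) (i : Fin l) (z : Vec n × Vec m) (dx : Vec n) : ℝ :=
  fderiv ℝ (fun p => g p i) z (dx, 0)

/-- `⟨∇_y g_i(z̄), dy⟩`, expressed via the Fréchet derivative in the `y`-slot. -/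
def dgY (g : Vec n × Vec m → Vec l) (i : Fin l) (z : Vec n × Vec m) (dy : Vec m) : ℝ :=
  fderiv ℝ (fun p => g p i) z (0, dy)

/-- Multiplier set `M(z)` of the lower-level VI. -/
def multSet (F : Vec n × Vec m → Vec m) (g : Vec n × Vec m → Vec l)
    (z : Vec n × Vec m) : Set (Vec l) :=
  {lam | (∀ i, 0 ≤ lam i) ∧
    (∀ j, F z j + ∑ i, lam i * gradYg g i z j = 0) ∧
    (∑ i, lam i * g z i = 0)}

/-- VI Lagrangian `L(z, λ) = F(z) + Σ_i λ_i ∇_y g_i(z)`. -/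
def viLag (F : Vec n × Vec m → Vec m) (g : Vec n × Vec m → Vec l)
    (z : Vec n × Vec m) (lam : Vec l) : Vec m :=
  fun j => F z j + ∑ i, lam i * gradYg g i z j

/-- Lifted critical cone `K(z̄, λ)`. -/
def liftedCone (g : Vec n × Vec m → Vec l) (zbar : Vec n × Vec m) (lam : Vec l) :
    Set (Vec n × Vec m) :=
  {d | ∀ i, g zbar i = 0 →
      (lam i = 0 → dgX g i zbar d.1 + dgY g i zbar d.2 ≤ 0) ∧
      (0 < lam i → dgX g i zbar d.1 + dgY g i zbar d.2 = 0)}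

/-- Directional critical set `K(z̄, λ; dx)`. -/
def dirCrit (g : Vec n × Vec m → Vec l) (zbar : Vec n × Vec m) (lam : Vec l)
    (dx : Vec n) : Set (Vec m) :=
  {dy | (dx, dy) ∈ liftedCone g zbar lam}

/-- `∇_x L(z̄, λ) dx`, the partial Jacobian of the VI Lagrangian in `x` applied to `dx`. -/
def jacLx (F : Vec n × Vec m → Vec m) (g : Vec n × Vec m → Vec l)
    (zbar : Vec n × Vec m) (lam : Vec l) (dx : Vec n) : Vec m :=
  fun j => fderiv ℝ (fun z => viLag F g z lam j) zbar (dx, 0)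

/-- `∇_y L(z̄, λ) dy`, the partial Jacobian of the VI Lagrangian in `y` applied to `dy`. -/
def jacLy (F : Vec n × Vec m → Vec m) (g : Vec n × Vec m → Vec l)
    (zbar : Vec n × Vec m) (lam : Vec l) (dy : Vec m) : Vec m :=
  fun j => fderiv ℝ (fun z => viLag F g z lam j) zbar (0, dy)

/-- `dy` solves `AVI(∇_x L(z̄,λ) dx, ∇_y L(z̄,λ), K(z̄,λ;dx))`. -/
def solvesAVI (F : Vec n × Vec m → Vec m) (g : Vec n × Vec m → Vec l)
    (zbar : Vec n × Vec m) (lam : Vec l) (dx : Vec n) (dy : Vec m) : Prop :=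
  dy ∈ dirCrit g zbar lam dx ∧
  ∀ v ∈ dirCrit g zbar lam dx,
    0 ≤ dotp (jacLx F g zbar lam dx + jacLy F g zbar lam dy) (v - dy)

/-- SBCQ at `zbar`: every feasible sequence converging to `zbar` admits a bounded
sequence of multipliers. -/
def SBCQ (F : Vec n × Vec m → Vec m) (g : Vec n × Vec m → Vec l)
    (Z : Set (Vec n × Vec m)) (zbar : Vec n × Vec m) : Prop :=
  ∀ zs : ℕ → Vec n × Vec m, (∀ k, zs k ∈ feasSet F g Z) → Tendsto zs atTop (𝓝 zbar) →
    ∃ lams : ℕ → Vec l, (∀ k, lams k ∈ multSet F g (zs k)) ∧ ∃ C : ℝ, ∀ k, ‖lams k‖ ≤ C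

/-- The MPEC linearized cone `𝓛(z̄; 𝓕)`. -/
def mpecLinCone (F : Vec n × Vec m → Vec m) (g : Vec n × Vec m → Vec l)
    (Z : Set (Vec n × Vec m)) (zbar : Vec n × Vec m) : Set (Vec n × Vec m) :=
  tangentCone Z zbar ∩
    ⋃ lam ∈ multSet F g zbar, {d : Vec n × Vec m | solvesAVI F g zbar lam d.1 d.2}

/-!
Both directions go through the full CQ, which identifies `T(z̄; 𝓕)` with `𝓛(z̄; 𝓕)`: the
tangent cone of the polyhedron `Z` intersected with the solutions of the lifted AVIs.

If the primal–dual systems are solvable, take `dz ∈ 𝓛(z̄; 𝓕)` with its multiplier `λ` and split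
`I₀(z̄, λ)` according to whether `⟨∇g_i(z̄), dz⟩` vanishes. The gradient equations write
`∇f(z̄) dz = ⟨π, ∇L dz⟩ - ⟨ζ, G dx + H dy⟩ - ⟨η, ∇g(z̄) dz⟩`; the last two terms are `≤ 0` by the
sign conditions, and the first is `≥ 0` because `dy + t π` is admissible in the AVI for small
`t > 0`.

Conversely, fix `λ` and a partition `(α, ᾱ)`. Every `(d, μ)` with `G dx + H dy ≤ 0` on the active
rows, `⟨∇g_i(z̄), d⟩ ≤ 0` on `ᾱ` and `= 0` on `α ∪ I₊`, `μ ≥ 0` on `α`, `μ = 0` off `α ∪ I₊`, and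
`∇L d + Σ μ_i ∇_y g_i(z̄) = 0` has `d ∈ 𝓛(z̄; 𝓕)`, since these are KKT conditions for the AVI.
Stationarity makes `∇f(z̄)` nonnegative on this polyhedral cone, and Farkas' lemma turns that
into `ζ`, `η`, `π`. Farkas' lemma follows from the double-dual theorem for closed cones, since
finitely generated cones are closed (by the conic Carathéodory theorem).
-/

section ConicHull

variable {E : Type*} [AddCommGroup E] [Module ℝ E] {κ : Type*} (v : κ → E)

lemma exists_erase_sum_smul_eq_of_not_linearIndepOn [DecidableEq κ] {T : Finset κ}
    (hT : ¬LinearIndepOn ℝ v (T : Set κ)) {u : κ → ℝ} (hu : ∀ i ∈ T, 0 ≤ u i) :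
    ∃ j ∈ T, ∃ u' : κ → ℝ, (∀ i ∈ T.erase j, 0 ≤ u' i) ∧
      ∑ i ∈ T.erase j, u' i • v i = ∑ i ∈ T, u i • v i := by
  obtain ⟨f, hf, i₀, hi₀, hfi₀⟩ := not_linearIndepOn_finset_iff.mp hT
  wlog hpos : 0 < f i₀ generalizing f
  · exact this (-f) (by simp [hf]) (neg_ne_zero.mpr hfi₀)
      (neg_pos.mpr (lt_of_le_of_ne (not_lt.mp hpos) hfi₀))
  obtain ⟨j, hj, hmin⟩ := Finset.exists_min_image (T.filter (0 < f ·)) (fun i => u i / f i)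
    ⟨i₀, Finset.mem_filter.mpr ⟨hi₀, hpos⟩⟩
  rw [Finset.mem_filter] at hj
  set t := u j / f j
  have ht : 0 ≤ t := div_nonneg (hu j hj.1) hj.2.le
  refine ⟨j, hj.1, fun i => u i - t * f i, fun i hi => ?_, ?_⟩
  · have hiT := Finset.mem_of_mem_erase hi
    rcases le_or_gt (f i) 0 with hfi | hfi
    · nlinarith [hu i hiT]
    · have := (le_div_iff₀ hfi).mp (hmin i (Finset.mem_filter.mpr ⟨hiT, hfi⟩))
      linarith
  · have hj0 : u j - t * f j = 0 := by simp [t, div_mul_cancel₀ _ hj.2.ne']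
    rw [Finset.sum_erase _ (by simp only [hj0, zero_smul])]
    simp [sub_smul, Finset.sum_sub_distrib, mul_smul, ← Finset.smul_sum, hf]

lemma exists_linearIndepOn_sum_smul_eq [DecidableEq κ] (T : Finset κ) (u : κ → ℝ)
    (hu : ∀ i ∈ T, 0 ≤ u i) :
    ∃ S : Finset κ, LinearIndepOn ℝ v (S : Set κ) ∧
      ∃ w : κ → ℝ, (∀ i ∈ S, 0 ≤ w i) ∧ ∑ i ∈ S, w i • v i = ∑ i ∈ T, u i • v i := by
  induction hn : T.card using Nat.strong_induction_on generalizing T u with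
  | _ n ih =>
  by_cases hT : LinearIndepOn ℝ v (T : Set κ)
  · exact ⟨T, hT, u, hu, rfl⟩
  obtain ⟨j, hj, u', hu', heq⟩ := exists_erase_sum_smul_eq_of_not_linearIndepOn v hT hu
  obtain ⟨S, hS, w, hw, hweq⟩ :=
    ih _ (hn ▸ Finset.card_erase_lt_of_mem hj) (T.erase j) u' hu' rfl
  exact ⟨S, hS, w, hw, hweq.trans heq⟩

variable [TopologicalSpace E] [IsTopologicalAddGroup E] [ContinuousSMul ℝ E] [T2Space E]

theorem PointedCone.isClosed_hull_range [Fintype κ] :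
    IsClosed (PointedCone.hull ℝ (Set.range v) : Set E) := by
  classical
  have hcover : (PointedCone.hull ℝ (Set.range v) : Set E) =
      ⋃ S ∈ {S : Finset κ | LinearIndepOn ℝ v (S : Set κ)},
        Fintype.linearCombination ℝ (fun i : S => v i) '' Set.Ici 0 := by
    ext x
    simp only [Set.mem_iUnion, Set.mem_image, Set.mem_Ici, SetLike.mem_coe, exists_prop,
      Set.mem_ofPred_eq, Fintype.linearCombination_apply]
    constructor
    · intro hx
      obtain ⟨c, rfl⟩ := (Submodule.mem_span_range_iff_exists_fun _).mp hx
      obtain ⟨S, hS, w, hw, hweq⟩ :=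
        exists_linearIndepOn_sum_smul_eq v Finset.univ (fun i => c i) fun i _ => (c i).2
      refine ⟨S, hS, fun i => w i, fun i => hw i i.2, ?_⟩
      rw [Finset.sum_coe_sort S (fun i => w i • v i), hweq]
      rfl
    · rintro ⟨S, -, w, hw, rfl⟩
      refine Submodule.sum_mem _ fun i _ => ?_
      exact (PointedCone.hull ℝ (Set.range v)).smul_mem (hw i)
        (PointedCone.subset_hull ⟨i, rfl⟩)
  rw [hcover]
  refine Set.Finite.isClosed_biUnion (Set.toFinite _) fun S hS => ?_
  have hinj : LinearMap.ker (Fintype.linearCombination ℝ (fun i : S => v i)) = ⊥ :=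
    LinearMap.ker_eq_bot.mpr (linearIndependent_iff_injective_fintypeLinearCombination.mp hS)
  exact (LinearMap.isClosedEmbedding_of_injective hinj).isClosedMap _ isClosed_Ici

end ConicHull

theorem mem_hull_range_of_forall_nonneg {V : Type*} [NormedAddCommGroup V] [NormedSpace ℝ V]
    [FiniteDimensional ℝ V] {κ : Type*} [Fintype κ] (φ : κ → StrongDual ℝ V)
    (c : StrongDual ℝ V) (h : ∀ x, (∀ k, 0 ≤ φ k x) → 0 ≤ c x) :
    c ∈ PointedCone.hull ℝ (Set.range φ) := by
  let C : ProperCone ℝ (StrongDual ℝ V) :=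
    { toSubmodule := PointedCone.hull ℝ (Set.range φ)
      isClosed' := PointedCone.isClosed_hull_range φ }
  change c ∈ C
  rw [← ProperCone.dual_flip_dual (topDualPairing ℝ V) C]
  intro x hx
  exact h x fun k => hx (PointedCone.subset_hull ⟨k, rfl⟩)

theorem exists_farkas_multipliers {V : Type*} [NormedAddCommGroup V] [NormedSpace ℝ V]
    [FiniteDimensional ℝ V] {κ ι : Type*} [Fintype κ] [Fintype ι]
    (φ : κ → StrongDual ℝ V) (ψ : ι → StrongDual ℝ V) (P : κ → Prop) (Q : ι → Prop)
    (c : StrongDual ℝ V)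
    (h : ∀ x, (∀ k, P k → 0 ≤ φ k x) → (∀ j, Q j → ψ j x = 0) → 0 ≤ c x) :
    ∃ (u : κ → ℝ) (w : ι → ℝ), (∀ k, 0 ≤ u k) ∧ (∀ k, ¬P k → u k = 0) ∧
      (∀ j, ¬Q j → w j = 0) ∧ c = ∑ k, u k • φ k + ∑ j, w j • ψ j := by
  classical
  let χ : κ ⊕ (ι ⊕ ι) → StrongDual ℝ V :=
    Sum.elim (fun k => if P k then φ k else 0)
      (Sum.elim (fun j => if Q j then ψ j else 0) (fun j => if Q j then -ψ j else 0))
  have hc := mem_hull_range_of_forall_nonneg χ c fun x hx => h x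
    (fun k hk => by simpa [χ, hk] using hx (.inl k))
    (fun j hj => le_antisymm (by simpa [χ, hj] using hx (.inr (.inr j)))
      (by simpa [χ, hj] using hx (.inr (.inl j))))
  obtain ⟨t, rfl⟩ := (Submodule.mem_span_range_iff_exists_fun _).mp hc
  refine ⟨fun k => if P k then t (.inl k) else 0,
    fun j => if Q j then t (.inr (.inl j)) - t (.inr (.inr j)) else 0,
    fun k => ?_, fun k hk => if_neg hk, fun j hj => if_neg hj, ?_⟩
  · dsimp only
    split_ifs
    exacts [(t _).2, le_rfl]
  · simp only [Fintype.sum_sum_type, χ, Sum.elim_inl, Sum.elim_inr, ← Finset.sum_add_distrib]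
    congr 1
    · refine Finset.sum_congr rfl fun k _ => ?_
      split_ifs <;> simp
    · refine Finset.sum_congr rfl fun j _ => ?_
      split_ifs <;> simp [← Nonneg.coe_smul, add_smul, sub_eq_add_neg]

section TangentCone

variable {E : Type*} [NormedAddCommGroup E] [NormedSpace ℝ E] {S : Set E} {z d : E}

lemma map_nonpos_of_mem_tangentCone (φ : StrongDual ℝ E) (hS : ∀ y ∈ S, φ y ≤ φ z)
    (hd : d ∈ tangentCone S z) : φ d ≤ 0 := by
  obtain ⟨zs, ts, hzs, -, hts, -, hlim⟩ := hd
  refine le_of_tendsto ((φ.continuous.tendsto d).comp hlim) (Eventually.of_forall fun k => ?_)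
  simp only [Function.comp, map_smul, map_sub, smul_eq_mul]
  exact mul_nonpos_of_nonneg_of_nonpos (inv_nonneg.mpr (hts k).le)
    (sub_nonpos.mpr (hS _ (hzs k)))

lemma mem_tangentCone_of_eventually_mem (h : ∀ᶠ t in 𝓝[>] (0 : ℝ), z + t • d ∈ S) :
    d ∈ tangentCone S z := by
  have hu : Tendsto (fun k : ℕ => 1 / ((k : ℝ) + 1)) atTop (𝓝[>] 0) :=
    tendsto_nhdsWithin_iff.mpr ⟨tendsto_one_div_add_atTop_nhds_zero_nat,
      Eventually.of_forall fun _ => Set.mem_Ioi.mpr Nat.one_div_pos_of_nat⟩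
  obtain ⟨N, hN⟩ := eventually_atTop.mp (hu.eventually (h.and self_mem_nhdsWithin))
  have hts : Tendsto (fun k : ℕ => 1 / (((k + N : ℕ) : ℝ) + 1)) atTop (𝓝 0) :=
    (tendsto_nhdsWithin_iff.mp hu).1.comp (tendsto_add_atTop_nat N)
  refine ⟨fun k => z + (1 / (((k + N : ℕ) : ℝ) + 1)) • d, fun k => 1 / (((k + N : ℕ) : ℝ) + 1),
    fun k => (hN _ (Nat.le_add_left N k)).1, ?_, fun k => (hN _ (Nat.le_add_left N k)).2, hts, ?_⟩
  · simpa using tendsto_const_nhds.add (hts.smul_const d)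
  · refine tendsto_const_nhds.congr fun k => ?_
    rw [add_sub_cancel_left, smul_smul, inv_mul_cancel₀ (by positivity), one_smul]

end TangentCone

lemma eventually_forall_add_mul_nonpos {ι : Type*} [Finite ι] {a b : ι → ℝ}
    (ha : ∀ i, a i ≤ 0) (hb : ∀ i, a i = 0 → b i ≤ 0) :
    ∀ᶠ t in 𝓝[>] (0 : ℝ), ∀ i, a i + t * b i ≤ 0 := by
  refine eventually_all.mpr fun i => ?_
  rcases (ha i).lt_or_eq with hlt | heq
  · have hlim : Tendsto (fun t => a i + t * b i) (𝓝[>] 0) (𝓝 (a i)) := by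
      refine tendsto_nhdsWithin_of_tendsto_nhds ?_
      simpa using (continuous_const.add (continuous_id.mul continuous_const)).tendsto
        (f := fun t : ℝ => a i + t * b i) 0
    exact (hlim.eventually (eventually_lt_nhds hlt)).mono fun t ht => ht.le
  · filter_upwards [self_mem_nhdsWithin] with t ht
    rw [heq, zero_add]
    exact mul_nonpos_of_nonneg_of_nonpos (le_of_lt ht) (hb i heq)

section MPEC

variable {s : ℕ} {f : Vec n × Vec m → ℝ} {F : Vec n × Vec m → Vec m}
  {g : Vec n × Vec m → Vec l} {G : Matrix (Fin s) (Fin n) ℝ} {H : Matrix (Fin s) (Fin m) ℝ}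
  {a : Vec s} {zbar : Vec n × Vec m} {lam : Vec l}

def polyRow (G : Matrix (Fin s) (Fin n) ℝ) (H : Matrix (Fin s) (Fin m) ℝ) (r : Fin s) :
    StrongDual ℝ (Vec n × Vec m) :=
  LinearMap.toContinuousLinearMap
    { toFun := fun z => G.mulVec z.1 r + H.mulVec z.2 r
      map_add' := fun z w => by
        simp only [Prod.fst_add, Prod.snd_add, Matrix.mulVec_add, Pi.add_apply]; ring
      map_smul' := fun c z => by
        simp only [Prod.smul_fst, Prod.smul_snd, Matrix.mulVec_smul, Pi.smul_apply, smul_eq_mul,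
          RingHom.id_apply]; ring }

@[simp] lemma polyRow_apply (r : Fin s) (z : Vec n × Vec m) :
    polyRow G H r z = G.mulVec z.1 r + H.mulVec z.2 r := rfl

def polySet (G : Matrix (Fin s) (Fin n) ℝ) (H : Matrix (Fin s) (Fin m) ℝ) (a : Vec s) :
    Set (Vec n × Vec m) :=
  {z | ∀ r, Matrix.mulVec G z.1 r + Matrix.mulVec H z.2 r + a r ≤ 0}

lemma mem_tangentCone_polySet_iff (hz : zbar ∈ polySet G H a) {d : Vec n × Vec m} :
    d ∈ tangentCone (polySet G H a) zbar ↔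
      ∀ r, polyRow G H r zbar + a r = 0 → polyRow G H r d ≤ 0 := by
  constructor
  · intro hd r hr
    refine map_nonpos_of_mem_tangentCone _ (fun y hy => ?_) hd
    linarith [polyRow_apply (G := G) (H := H) r y, hy r]
  · intro hd
    refine mem_tangentCone_of_eventually_mem
      ((eventually_forall_add_mul_nonpos hz hd).mono fun t ht r => ?_)
    convert ht r using 1
    simp only [polyRow_apply, Prod.fst_add, Prod.snd_add, Prod.smul_fst, Prod.smul_snd,
      Matrix.mulVec_add, Matrix.mulVec_smul, Pi.add_apply, Pi.smul_apply, smul_eq_mul]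
    ring

lemma dgX_add_dgY (i : Fin l) (dx : Vec n) (dy : Vec m) :
    dgX g i zbar dx + dgY g i zbar dy = fderiv ℝ (fun p => g p i) zbar (dx, dy) := by
  rw [dgX, dgY, ← map_add, Prod.mk_add_mk, add_zero, zero_add]

lemma jacLx_add_jacLy_apply (dx : Vec n) (dy : Vec m) (j : Fin m) :
    (jacLx F g zbar lam dx + jacLy F g zbar lam dy) j =
      fderiv ℝ (fun z => viLag F g z lam j) zbar (dx, dy) := by
  rw [Pi.add_apply, jacLx, jacLy, ← map_add, Prod.mk_add_mk, add_zero, zero_add]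

lemma dgY_eq_dotProduct (i : Fin l) (dy : Vec m) : dgY g i zbar dy = gradYg g i zbar ⬝ᵥ dy := by
  change ((fderiv ℝ (fun p => g p i) zbar).comp (ContinuousLinearMap.inr ℝ (Vec n) (Vec m))) dy = _
  conv_lhs => rw [pi_eq_sum_univ' dy]
  simp [dotProduct, gradYg, mul_comm]

lemma dgY_add_smul (i : Fin l) (dy e : Vec m) (t : ℝ) :
    dgY g i zbar (dy + t • e) = dgY g i zbar dy + t * dgY g i zbar e := by
  simp only [dgY_eq_dotProduct, dotProduct_add, dotProduct_smul, smul_eq_mul]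

lemma dgY_sub (i : Fin l) (v dy : Vec m) :
    dgY g i zbar (v - dy) = dgY g i zbar v - dgY g i zbar dy := by
  simp only [dgY_eq_dotProduct, dotProduct_sub]

lemma dotp_nonneg_of_solvesAVI {dx : Vec n} {dy π : Vec m}
    (hAVI : solvesAVI F g zbar lam dx dy)
    (hπzero : ∀ i, g zbar i = 0 → lam i = 0 → dgX g i zbar dx + dgY g i zbar dy = 0 →
      dgY g i zbar π ≤ 0)
    (hπpos : ∀ i, g zbar i = 0 → 0 < lam i → dgY g i zbar π = 0) :
    0 ≤ dotp (jacLx F g zbar lam dx + jacLy F g zbar lam dy) π := by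
  obtain ⟨hdir, hvi⟩ := hAVI
  obtain ⟨t, ht, htpos⟩ := ((eventually_forall_add_mul_nonpos
    (a := fun i : {i // g zbar i = 0 ∧ lam i = 0} => dgX g i zbar dx + dgY g i zbar dy)
    (b := fun i => dgY g i zbar π) (fun i => (hdir i i.2.1).1 i.2.2)
    (fun i h => hπzero i i.2.1 i.2.2 h)).and self_mem_nhdsWithin).exists
  have hmem : dy + t • π ∈ dirCrit g zbar lam dx := fun i hi =>
    ⟨fun h0 => by rw [dgY_add_smul, ← add_assoc]; exact ht ⟨i, hi, h0⟩,
     fun hpos => by rw [dgY_add_smul, hπpos i hi hpos, mul_zero, add_zero]; exact (hdir i hi).2 hpos⟩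
  have := hvi _ hmem
  rw [add_sub_cancel_left] at this
  change 0 ≤ _ ⬝ᵥ (t • π) at this
  rw [dotProduct_smul, smul_eq_mul] at this
  exact (mul_nonneg_iff_of_pos_left htpos).mp this

lemma solvesAVI_of_multipliers {dx : Vec n} {dy : Vec m} {T : Set (Fin l)} {μ : Vec l}
    (hlam : ∀ i, 0 ≤ lam i) (hdir : dy ∈ dirCrit g zbar lam dx)
    (hT : ∀ i ∈ T, g zbar i = 0 ∧ dgX g i zbar dx + dgY g i zbar dy = 0)
    (hμT : ∀ i ∉ T, μ i = 0) (hμ : ∀ i ∈ T, lam i = 0 → 0 ≤ μ i)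
    (hL : ∀ j, (jacLx F g zbar lam dx + jacLy F g zbar lam dy) j +
      ∑ i, μ i * gradYg g i zbar j = 0) :
    solvesAVI F g zbar lam dx dy := by
  refine ⟨hdir, fun v hv => ?_⟩
  have hw : jacLx F g zbar lam dx + jacLy F g zbar lam dy = -∑ i, μ i • gradYg g i zbar := by
    ext j
    simp only [Pi.neg_apply, Finset.sum_apply, Pi.smul_apply, smul_eq_mul]
    linarith [hL j]
  change 0 ≤ _ ⬝ᵥ _
  rw [hw, neg_dotProduct, sum_dotProduct, neg_nonneg]
  refine Finset.sum_nonpos fun i _ => ?_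
  rw [smul_dotProduct, ← dgY_eq_dotProduct, smul_eq_mul]
  by_cases hi : i ∈ T
  · obtain ⟨hgi, hdy⟩ := hT i hi
    have hsub : dgY g i zbar (v - dy) = dgX g i zbar dx + dgY g i zbar v := by
      rw [dgY_sub]; linarith
    rw [hsub]
    rcases (hlam i).eq_or_lt with h0 | hpos
    · exact mul_nonpos_of_nonneg_of_nonpos (hμ i hi h0.symm) ((hv i hgi).1 h0.symm)
    · rw [(hv i hgi).2 hpos, mul_zero]
  · rw [hμT i hi, zero_mul]

lemma StrongDual.ext_single_prod {φ ψ : StrongDual ℝ (Vec n × Vec m)}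
    (hx : ∀ p, φ (Pi.single p 1, 0) = ψ (Pi.single p 1, 0))
    (hy : ∀ q, φ (0, Pi.single q 1) = ψ (0, Pi.single q 1)) : φ = ψ :=
  ContinuousLinearMap.coe_injective <| LinearMap.prod_ext
    (LinearMap.pi_ext' fun p => LinearMap.ext_ring (hx p))
    (LinearMap.pi_ext' fun q => LinearMap.ext_ring (hy q))

variable (f F g G H a zbar lam) in
def IsPrimalDualSolution (al abar : Set (Fin l)) (ζ : Vec s) (η : Vec l) (π : Vec m) : Prop :=
  (∀ p : Fin n,
    fderiv ℝ f zbar (Pi.single p 1, 0) + (∑ r, G r p * ζ r) +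
      (∑ i, η i * dgX g i zbar (Pi.single p 1)) =
    ∑ j, π j * jacLx F g zbar lam (Pi.single p 1) j) ∧
  (∀ q : Fin m,
    fderiv ℝ f zbar (0, Pi.single q 1) + (∑ r, H r q * ζ r) +
      (∑ i, η i * dgY g i zbar (Pi.single q 1)) =
    ∑ j, π j * jacLy F g zbar lam (Pi.single q 1) j) ∧
  (∀ i ∈ al, dgY g i zbar π ≤ 0) ∧
  (∀ i, g zbar i = 0 → 0 < lam i → dgY g i zbar π = 0) ∧
  (∀ i ∈ abar, 0 ≤ η i) ∧
  (∀ i, g zbar i ≠ 0 → η i = 0) ∧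
  (∀ r, 0 ≤ ζ r) ∧
  (∑ r, ζ r * (Matrix.mulVec G zbar.1 r + Matrix.mulVec H zbar.2 r + a r) = 0)

lemma gradient_eqns_iff {ζ : Vec s} {η : Vec l} {π : Vec m} :
    ((∀ p : Fin n,
      fderiv ℝ f zbar (Pi.single p 1, 0) + (∑ r, G r p * ζ r) +
        (∑ i, η i * dgX g i zbar (Pi.single p 1)) =
      ∑ j, π j * jacLx F g zbar lam (Pi.single p 1) j) ∧
    (∀ q : Fin m,
      fderiv ℝ f zbar (0, Pi.single q 1) + (∑ r, H r q * ζ r) +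
        (∑ i, η i * dgY g i zbar (Pi.single q 1)) =
      ∑ j, π j * jacLy F g zbar lam (Pi.single q 1) j)) ↔
    ∀ d, fderiv ℝ f zbar d + ∑ r, ζ r * polyRow G H r d +
        ∑ i, η i * fderiv ℝ (fun p => g p i) zbar d =
      ∑ j, π j * fderiv ℝ (fun z => viLag F g z lam j) zbar d := by
  constructor
  · rintro ⟨hx, hy⟩ d
    have key : fderiv ℝ f zbar + ∑ r, ζ r • polyRow G H r +
        ∑ i, η i • fderiv ℝ (fun p => g p i) zbar =
        ∑ j, π j • fderiv ℝ (fun z => viLag F g z lam j) zbar := by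
      refine StrongDual.ext_single_prod (fun p => ?_) (fun q => ?_)
      · simpa [Matrix.mulVec_single_one, mul_comm, dgX, jacLx] using hx p
      · simpa [Matrix.mulVec_single_one, mul_comm, dgY, jacLy] using hy q
    simpa using congrArg (fun φ : StrongDual ℝ (Vec n × Vec m) => φ d) key
  · intro h
    refine ⟨fun p => ?_, fun q => ?_⟩
    · simpa [Matrix.mulVec_single_one, mul_comm, dgX, jacLx] using h (Pi.single p 1, 0)
    · simpa [Matrix.mulVec_single_one, mul_comm, dgY, jacLy] using h (0, Pi.single q 1)

lemma sum_mul_polyRow_nonpos {ζ : Vec s} {d : Vec n × Vec m} (hz : zbar ∈ polySet G H a)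
    (hd : d ∈ tangentCone (polySet G H a) zbar) (hζ : ∀ r, 0 ≤ ζ r)
    (hcompl : ∑ r, ζ r * (Matrix.mulVec G zbar.1 r + Matrix.mulVec H zbar.2 r + a r) = 0) :
    ∑ r, ζ r * polyRow G H r d ≤ 0 := by
  have hterm := (Finset.sum_eq_zero_iff_of_nonpos fun r _ =>
    mul_nonpos_of_nonneg_of_nonpos (hζ r) (hz r)).mp hcompl
  refine Finset.sum_nonpos fun r _ => ?_
  rcases mul_eq_zero.mp (hterm r (Finset.mem_univ r)) with h0 | hactive
  · rw [h0, zero_mul]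
  · exact mul_nonpos_of_nonneg_of_nonpos (hζ r)
      ((mem_tangentCone_polySet_iff hz).mp hd r hactive)

lemma stationary_of_primalDual (hz : zbar ∈ polySet G H a)
    (hCQ : tangentCone (feasSet F g (polySet G H a)) zbar = mpecLinCone F g (polySet G H a) zbar)
    (hdual : ∀ lam ∈ multSet F g zbar, ∀ al abar : Set (Fin l),
      al ∪ abar = {i | g zbar i = 0 ∧ lam i = 0} → al ∩ abar = ∅ →
      ∃ ζ η π, IsPrimalDualSolution f F g G H a zbar lam al abar ζ η π) :
    ∀ dz ∈ tangentCone (feasSet F g (polySet G H a)) zbar, 0 ≤ fderiv ℝ f zbar dz := by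
  intro dz hdz
  rw [hCQ] at hdz
  obtain ⟨hdZ, hdAVI⟩ := hdz
  obtain ⟨lam, hlam, hAVI⟩ := Set.mem_iUnion₂.mp hdAVI
  let Dg i := fderiv ℝ (fun p => g p i) zbar dz
  obtain ⟨ζ, η, π, hx, hy, hπα, hπpos, hηα, hη0, hζ, hcompl⟩ := hdual lam hlam
    {i | g zbar i = 0 ∧ lam i = 0 ∧ Dg i = 0} {i | g zbar i = 0 ∧ lam i = 0 ∧ Dg i ≠ 0}
    (by ext i; simp only [Set.mem_union, Set.mem_ofPred_eq]; tauto)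
    (by ext i; simp only [Set.mem_inter_iff, Set.mem_ofPred_eq, Set.mem_empty_iff_false]; tauto)
  have hdir := hAVI.1
  have hπ : 0 ≤ ∑ j, π j * fderiv ℝ (fun z => viLag F g z lam j) zbar dz := by
    have := dotp_nonneg_of_solvesAVI hAVI
      (fun i hgi h0 hDg => hπα i ⟨hgi, h0, (dgX_add_dgY i _ _).symm.trans hDg⟩) hπpos
    simpa only [dotp, jacLx_add_jacLy_apply, Prod.mk.eta, mul_comm] using this
  have hη : ∑ i, η i * Dg i ≤ 0 := by
    refine Finset.sum_nonpos fun i _ => ?_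
    by_cases hgi : g zbar i = 0
    · have hcone := hdir i hgi
      rw [dgX_add_dgY] at hcone
      rcases (hlam.1 i).eq_or_lt with h0 | hpos
      · by_cases hDg : Dg i = 0
        · rw [hDg, mul_zero]
        · exact mul_nonpos_of_nonneg_of_nonpos (hηα i ⟨hgi, h0.symm, hDg⟩) (hcone.1 h0.symm)
      · rw [show Dg i = 0 from hcone.2 hpos, mul_zero]
    · rw [hη0 i hgi, zero_mul]
  have hid := gradient_eqns_iff.mp ⟨hx, hy⟩ dz
  linarith [sum_mul_polyRow_nonpos hz hdZ hζ hcompl]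

lemma mem_tangentCone_feasSet_of_linearized (hz : zbar ∈ polySet G H a)
    (hCQ : tangentCone (feasSet F g (polySet G H a)) zbar = mpecLinCone F g (polySet G H a) zbar)
    (hlam : lam ∈ multSet F g zbar) {al abar : Set (Fin l)}
    (hu : al ∪ abar = {i | g zbar i = 0 ∧ lam i = 0}) {d : Vec n × Vec m} {μ : Vec l}
    (hrow : ∀ r, polyRow G H r zbar + a r = 0 → polyRow G H r d ≤ 0)
    (habar : ∀ i ∈ abar, fderiv ℝ (fun p => g p i) zbar d ≤ 0)
    (hal : ∀ i ∈ al, 0 ≤ μ i)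
    (hT : ∀ i, i ∈ al ∨ (g zbar i = 0 ∧ 0 < lam i) → fderiv ℝ (fun p => g p i) zbar d = 0)
    (hμ : ∀ i, ¬(i ∈ al ∨ (g zbar i = 0 ∧ 0 < lam i)) → μ i = 0)
    (hL : ∀ j, fderiv ℝ (fun z => viLag F g z lam j) zbar d + ∑ i, gradYg g i zbar j * μ i = 0) :
    d ∈ tangentCone (feasSet F g (polySet G H a)) zbar := by
  have hI₀ : ∀ i, i ∈ al ∨ i ∈ abar ↔ g zbar i = 0 ∧ lam i = 0 := fun i => Set.ext_iff.mp hu i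
  rw [hCQ]
  refine ⟨(mem_tangentCone_polySet_iff hz).mpr hrow, Set.mem_iUnion₂.mpr ⟨lam, hlam, ?_⟩⟩
  refine solvesAVI_of_multipliers (T := {i | i ∈ al ∨ (g zbar i = 0 ∧ 0 < lam i)}) hlam.1
    (fun i hgi => ?_) (fun i hi => ?_) hμ (fun i hi h0 => ?_) (fun j => ?_)
  · rw [dgX_add_dgY, Prod.mk.eta]
    refine ⟨fun h0 => ?_, fun hpos => hT i (Or.inr ⟨hgi, hpos⟩)⟩
    rcases (hI₀ i).mpr ⟨hgi, h0⟩ with hi | hi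
    exacts [(hT i (Or.inl hi)).le, habar i hi]
  · refine ⟨?_, by rw [dgX_add_dgY, Prod.mk.eta]; exact hT i hi⟩
    rcases hi with hi | hi
    exacts [((hI₀ i).mp (Or.inl hi)).1, hi.1]
  · rcases hi with hi | hi
    exacts [hal i hi, absurd h0 hi.2.ne']
  · rw [jacLx_add_jacLy_apply, Prod.mk.eta]
    simpa only [mul_comm] using hL j

lemma exists_dual_certificate_of_stationary (hz : zbar ∈ polySet G H a)
    (hCQ : tangentCone (feasSet F g (polySet G H a)) zbar = mpecLinCone F g (polySet G H a) zbar)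
    (hstat : ∀ dz ∈ tangentCone (feasSet F g (polySet G H a)) zbar, 0 ≤ fderiv ℝ f zbar dz)
    (hlam : lam ∈ multSet F g zbar) {al abar : Set (Fin l)}
    (hu : al ∪ abar = {i | g zbar i = 0 ∧ lam i = 0}) :
    ∃ (ζ : Vec s) (ν ρ κ σ : Vec l) (π : Vec m),
      (∀ r, 0 ≤ ζ r) ∧ (∀ r, polyRow G H r zbar + a r ≠ 0 → ζ r = 0) ∧
      (∀ i, 0 ≤ ν i) ∧ (∀ i ∉ abar, ν i = 0) ∧ (∀ i, 0 ≤ ρ i) ∧ (∀ i ∉ al, ρ i = 0) ∧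
      (∀ i, ¬(i ∈ al ∨ (g zbar i = 0 ∧ 0 < lam i)) → κ i = 0) ∧
      (∀ i, i ∈ al ∨ (g zbar i = 0 ∧ 0 < lam i) → σ i = 0) ∧
      (∀ d, fderiv ℝ f zbar d + ∑ r, ζ r * polyRow G H r d +
          ∑ i, (ν i - κ i) * fderiv ℝ (fun p => g p i) zbar d =
        ∑ j, π j * fderiv ℝ (fun z => viLag F g z lam j) zbar d) ∧
      ∀ i, ρ i + dgY g i zbar π + σ i = 0 := by
  let T : Set (Fin l) := {i | i ∈ al ∨ (g zbar i = 0 ∧ 0 < lam i)}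
  let fst := ContinuousLinearMap.fst ℝ (Vec n × Vec m) (Vec l)
  let μ (i : Fin l) := (ContinuousLinearMap.proj i).comp
    (ContinuousLinearMap.snd ℝ (Vec n × Vec m) (Vec l))
  let Dg (i : Fin l) := fderiv ℝ (fun p => g p i) zbar
  let DL (j : Fin m) := fderiv ℝ (fun z => viLag F g z lam j) zbar
  -- Variables `(d, μ)`: a direction and KKT multipliers of the AVI along it.
  obtain ⟨u, w, hu0, huP, hwQ, hc⟩ := exists_farkas_multipliers
    (Sum.elim (fun r => -(polyRow G H r).comp fst) (Sum.elim (fun i => -(Dg i).comp fst) μ))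
    (Sum.elim (fun i => (Dg i).comp fst)
      (Sum.elim (fun j => (DL j).comp fst + ∑ i, gradYg g i zbar j • μ i) μ))
    (Sum.elim (fun r => polyRow G H r zbar + a r = 0) (Sum.elim (· ∈ abar) (· ∈ al)))
    (Sum.elim (· ∈ T) (Sum.elim (fun _ => True) (· ∉ T)))
    ((fderiv ℝ f zbar).comp fst) fun x hineq heq => hstat _
      (mem_tangentCone_feasSet_of_linearized (μ := x.2) hz hCQ hlam hu
        (fun r hr => neg_nonneg.mp (hineq (.inl r) hr))
        (fun i hi => by simpa [fst, Dg] using hineq (.inr (.inl i)) hi)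
        (fun i hi => by simpa [μ] using hineq (.inr (.inr i)) hi)
        (fun i hi => by simpa [fst, Dg] using heq (.inl i) hi)
        (fun i hi => by simpa [μ] using heq (.inr (.inr i)) hi)
        (fun j => by simpa [fst, DL, μ] using heq (.inr (.inl j)) trivial))
  have hE : ∀ d, _ := fun d =>
    congrArg (fun Λ : StrongDual ℝ ((Vec n × Vec m) × Vec l) => Λ (d, 0)) hc
  have hM : ∀ i, _ := fun i =>
    congrArg (fun Λ : StrongDual ℝ ((Vec n × Vec m) × Vec l) => Λ (0, Pi.single i 1)) hc
  simp only [add_apply, FunLike.coe_sum, Finset.sum_apply, FunLike.coe_smul, Pi.smul_apply,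
    smul_eq_mul, Fintype.sum_sum_type, Sum.elim_inl, Sum.elim_inr, neg_apply,
    ContinuousLinearMap.comp_apply, polyRow_apply, fst, μ, ContinuousLinearMap.coe_fst',
    ContinuousLinearMap.coe_snd', ContinuousLinearMap.proj_apply, Pi.single_apply, map_zero,
    mul_ite, mul_one, mul_zero, Finset.sum_ite_eq', Finset.mem_univ, if_true,
    Finset.sum_const_zero, neg_zero, zero_add, add_zero] at hE hM
  refine ⟨fun r => u (.inl r), fun i => u (.inr (.inl i)), fun i => u (.inr (.inr i)),
    fun i => w (.inl i), fun i => w (.inr (.inr i)), fun j => w (.inr (.inl j)),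
    fun r => hu0 _, fun r => huP (.inl r), fun i => hu0 _, fun i => huP (.inr (.inl i)),
    fun i => hu0 _, fun i => huP (.inr (.inr i)), fun i => hwQ (.inl i),
    fun i hi => hwQ (.inr (.inr i)) (not_not.mpr hi), fun d => ?_, fun i => ?_⟩
  · have := hE d
    simp only [Dg, DL, mul_neg, Finset.sum_neg_distrib] at this
    simp only [sub_mul, Finset.sum_sub_distrib, polyRow_apply]
    linarith
  · have := hM i
    simp only [dgY_eq_dotProduct, dotProduct, mul_comm (gradYg g i zbar _)]
    linarith

lemma exists_primalDual_of_stationary (hz : zbar ∈ polySet G H a)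
    (hCQ : tangentCone (feasSet F g (polySet G H a)) zbar = mpecLinCone F g (polySet G H a) zbar)
    (hstat : ∀ dz ∈ tangentCone (feasSet F g (polySet G H a)) zbar, 0 ≤ fderiv ℝ f zbar dz)
    (hlam : lam ∈ multSet F g zbar) {al abar : Set (Fin l)}
    (hu : al ∪ abar = {i | g zbar i = 0 ∧ lam i = 0}) (hdis : al ∩ abar = ∅) :
    ∃ ζ η π, IsPrimalDualSolution f F g G H a zbar lam al abar ζ η π := by
  obtain ⟨ζ, ν, ρ, κ, σ, π, hζ, hζ0, hν, hν0, hρ, hρ0, hκ0, hσ0, hgrad, hM⟩ :=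
    exists_dual_certificate_of_stationary hz hCQ hstat hlam hu
  have hI₀ : ∀ i, i ∈ al ∨ i ∈ abar ↔ g zbar i = 0 ∧ lam i = 0 := fun i => Set.ext_iff.mp hu i
  obtain ⟨hx, hy⟩ := gradient_eqns_iff.mpr hgrad
  refine ⟨ζ, fun i => ν i - κ i, π, hx, hy, fun i hi => ?_, fun i hgi hpos => ?_, fun i hi => ?_,
    fun i hgi => ?_, hζ, Finset.sum_eq_zero fun r _ => ?_⟩
  · linarith [hM i, hρ i, hσ0 i (Or.inl hi)]
  · have hiα : i ∉ al := fun hi => hpos.ne' ((hI₀ i).mp (Or.inl hi)).2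
    linarith [hM i, hρ0 i hiα, hσ0 i (Or.inr ⟨hgi, hpos⟩)]
  · have hiT : ¬(i ∈ al ∨ (g zbar i = 0 ∧ 0 < lam i)) := by
      rintro (hiα | ⟨-, hpos⟩)
      · exact (Set.eq_empty_iff_forall_notMem.mp hdis i) ⟨hiα, hi⟩
      · exact hpos.ne' ((hI₀ i).mp (Or.inr hi)).2
    simp only [hκ0 i hiT, sub_zero, hν i]
  · have hiαbar : i ∉ abar := fun hi => hgi ((hI₀ i).mp (Or.inr hi)).1
    have hiT : ¬(i ∈ al ∨ (g zbar i = 0 ∧ 0 < lam i)) := by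
      rintro (hi | ⟨hi, -⟩)
      exacts [hgi ((hI₀ i).mp (Or.inl hi)).1, hgi hi]
    simp only [hν0 i hiαbar, hκ0 i hiT, sub_zero]
  · by_cases hr : polyRow G H r zbar + a r = 0
    · rw [← polyRow_apply, hr, mul_zero]
    · rw [hζ0 r hr, zero_mul]

end MPEC

theorem stmt_6_general {n m l s : ℕ}
    (f : Vec n × Vec m → ℝ)
    (F : Vec n × Vec m → Vec m) (g : Vec n × Vec m → Vec l)
    (G : Matrix (Fin s) (Fin n) ℝ) (H : Matrix (Fin s) (Fin m) ℝ) (a : Vec s)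
    (Z : Set (Vec n × Vec m))
    (hZ : Z = {z : Vec n × Vec m |
      ∀ r, Matrix.mulVec G z.1 r + Matrix.mulVec H z.2 r + a r ≤ 0})
    (zbar : Vec n × Vec m) (hzbar : zbar ∈ feasSet F g Z)
    (hfullCQ : tangentCone (feasSet F g Z) zbar = mpecLinCone F g Z zbar) :
    -- `z̄` is a stationary point of the MPEC ...
    (∀ dz ∈ tangentCone (feasSet F g Z) zbar, 0 ≤ fderiv ℝ f zbar dz) ↔
    -- ... iff for every multiplier and every partition of `I₀(z̄,λ)` the
    -- primal–dual system below is solvable.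
    (∀ lam ∈ multSet F g zbar, ∀ al abar : Set (Fin l),
      al ∪ abar = {i | g zbar i = 0 ∧ lam i = 0} → al ∩ abar = ∅ →
      ∃ (ζ : Vec s) (η : Vec l) (π : Vec m),
        (∀ p : Fin n,
          fderiv ℝ f zbar (Pi.single p 1, 0) + (∑ r, G r p * ζ r) +
            (∑ i, η i * dgX g i zbar (Pi.single p 1)) =
          ∑ j, π j * jacLx F g zbar lam (Pi.single p 1) j) ∧
        (∀ q : Fin m,
          fderiv ℝ f zbar (0, Pi.single q 1) + (∑ r, H r q * ζ r) +
            (∑ i, η i * dgY g i zbar (Pi.single q 1)) =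
          ∑ j, π j * jacLy F g zbar lam (Pi.single q 1) j) ∧
        (∀ i ∈ al, dgY g i zbar π ≤ 0) ∧
        (∀ i, g zbar i = 0 → 0 < lam i → dgY g i zbar π = 0) ∧
        (∀ i ∈ abar, 0 ≤ η i) ∧
        (∀ i, g zbar i ≠ 0 → η i = 0) ∧
        (∀ r, 0 ≤ ζ r) ∧
        (∑ r, ζ r * (Matrix.mulVec G zbar.1 r + Matrix.mulVec H zbar.2 r + a r) = 0)) := by
  subst hZ
  exact ⟨fun hstat lam hlam al abar hu hdis =>
      exists_primalDual_of_stationary hzbar.1 hfullCQ hstat hlam hu hdis,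
    stationary_of_primalDual hzbar.1 hfullCQ⟩

/-- Theorem 3.3.4: primal–dual characterization of MPEC stationarity under SBCQ and
the full CQ, for polyhedral upper level `Z = {(x,y) : Gx + Hy + a ≤ 0}`. -/
theorem stmt_6 {n m l s : ℕ}
    (f : Vec n × Vec m → ℝ)
    (F : Vec n × Vec m → Vec m) (g : Vec n × Vec m → Vec l)
    (G : Matrix (Fin s) (Fin n) ℝ) (H : Matrix (Fin s) (Fin m) ℝ) (a : Vec s)
    (Z : Set (Vec n × Vec m))
    (hZ : Z = {z : Vec n × Vec m |
      ∀ r, Matrix.mulVec G z.1 r + Matrix.mulVec H z.2 r + a r ≤ 0})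
    (hf : ContDiff ℝ 1 f) (hF : ContDiff ℝ 1 F) (hg : ContDiff ℝ 2 g)
    (zbar : Vec n × Vec m) (hzbar : zbar ∈ feasSet F g Z)
    (hSBCQ : SBCQ F g Z zbar)
    (hfullCQ : tangentCone (feasSet F g Z) zbar = mpecLinCone F g Z zbar) :
    -- `z̄` is a stationary point of the MPEC ...
    (∀ dz ∈ tangentCone (feasSet F g Z) zbar, 0 ≤ fderiv ℝ f zbar dz) ↔
    -- ... iff for every multiplier and every partition of `I₀(z̄,λ)` the
    -- primal–dual system below is solvable.
    (∀ lam ∈ multSet F g zbar, ∀ al abar : Set (Fin l),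
      al ∪ abar = {i | g zbar i = 0 ∧ lam i = 0} → al ∩ abar = ∅ →
      ∃ (ζ : Vec s) (η : Vec l) (π : Vec m),
        (∀ p : Fin n,
          fderiv ℝ f zbar (Pi.single p 1, 0) + (∑ r, G r p * ζ r) +
            (∑ i, η i * dgX g i zbar (Pi.single p 1)) =
          ∑ j, π j * jacLx F g zbar lam (Pi.single p 1) j) ∧
        (∀ q : Fin m,
          fderiv ℝ f zbar (0, Pi.single q 1) + (∑ r, H r q * ζ r) +
            (∑ i, η i * dgY g i zbar (Pi.single q 1)) =
          ∑ j, π j * jacLy F g zbar lam (Pi.single q 1) j) ∧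
        (∀ i ∈ al, dgY g i zbar π ≤ 0) ∧
        (∀ i, g zbar i = 0 → 0 < lam i → dgY g i zbar π = 0) ∧
        (∀ i ∈ abar, 0 ≤ η i) ∧
        (∀ i, g zbar i ≠ 0 → η i = 0) ∧
        (∀ r, 0 ≤ ζ r) ∧
        (∑ r, ζ r * (Matrix.mulVec G zbar.1 r + Matrix.mulVec H zbar.2 r + a r) = 0)) :=
  stmt_6_general f F g G H a Z hZ zbar hzbar hfullCQ
end
end

section
/- Let 𝓕 = {(x, y₁, y₂) ∈ ℝ³ : y₁ ≥ 0, x² + x + y₁ ≥ 0, y₁(x² + x + y₁) = 0, y₂ ≥ 0, x³ + y₂ ≥ 0, y₂(x³ + y₂) = 0}. Then the tangent cone to 𝓕 at the origin is the nonconvex union of two rays spanned positively: T((0,0,0); 𝓕) = {(a, 0, 0) : a ≥ 0} ∪ {(−a, a, 0) : a ≥ 0}. -/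
/-!
A tangent direction `d` is a limit of `tₖ⁻¹ • zₖ` with `zₖ` feasible and `tₖ ↓ 0`. Each
complementarity pair `(g, h)` of constraint functions vanishes at the origin and maps feasible
points into the closed cone `{a ≥ 0, b ≥ 0, a * b = 0}`, while `tₖ⁻¹ • (g, h)(zₖ)` converges to
`(g' d, h' d)`. Hence `(d₂, d₁ + d₂)` and `(d₃, d₃)` lie in that cone, which puts `d` on one of
the two rays. Conversely, the curves `t ↦ (a t, 0, 0)` and `t ↦ (-a t, a t - (a t)², (a t)³)`
are feasible for small `t > 0` and leave the origin with velocities `(a, 0, 0)` and `(-a, a, 0)`.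
-/

open Filter Topology

open Asymptotics

section TangentCone

variable {E F : Type*} [NormedAddCommGroup E] [NormedSpace ℝ E]
  [NormedAddCommGroup F] [NormedSpace ℝ F]

theorem HasFDerivAt.tendsto_inv_smul_sub {φ : E → F} {φ' : E →L[ℝ] F} {z d : E}
    {zs : ℕ → E} {ts : ℕ → ℝ} (hφ : HasFDerivAt φ φ' z) (hz : Tendsto zs atTop (𝓝 z))
    (hd : Tendsto (fun k => (ts k)⁻¹ • (zs k - z)) atTop (𝓝 d)) :
    Tendsto (fun k => (ts k)⁻¹ • (φ (zs k) - φ z)) atTop (𝓝 (φ' d)) := by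
  have hrem : (fun k => (ts k)⁻¹ • (φ (zs k) - φ z - φ' (zs k - z)))
      =o[atTop] fun k => (ts k)⁻¹ • (zs k - z) :=
    (isBigO_refl _ _).smul_isLittleO (hφ.isLittleO.comp_tendsto hz)
  have hrem0 := (isLittleO_one_iff ℝ).1 (hrem.trans_isBigO (hd.isBigO_one ℝ))
  convert (φ'.continuous.tendsto d |>.comp hd).add hrem0 using 2 with k
  · simp [smul_sub]
  · simp

theorem HasFDerivAt.apply_mem_of_mem_tangentCone {S : Set E} {K : Set F} {φ : E → F}
    {φ' : E →L[ℝ] F} {z d : E}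
    (hφ : HasFDerivAt φ φ' z) (hφz : φ z = 0) (hS : Set.MapsTo φ S K) (hK : IsClosed K)
    (hKcone : ∀ c : ℝ, 0 < c → ∀ x ∈ K, c • x ∈ K) (hd : d ∈ tangentCone S z) :
    φ' d ∈ K := by
  obtain ⟨zs, ts, hmem, hz, hpos, -, hlim⟩ := hd
  refine hK.mem_of_tendsto (hφ.tendsto_inv_smul_sub hz hlim) (Eventually.of_forall fun k => ?_)
  simpa [hφz] using hKcone _ (inv_pos.2 (hpos k)) _ (hS (hmem k))

theorem mem_tangentCone_of_hasDerivWithinAt {S : Set E} {γ : ℝ → E} {d : E}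
    {z : E} (hγ0 : γ 0 = z) (hS : ∀ᶠ t in 𝓝[>] 0, γ t ∈ S)
    (hγ : HasDerivWithinAt γ d (Set.Ioi 0) 0) : d ∈ tangentCone S z := by
  subst hγ0
  have hτ : Tendsto (fun k : ℕ => 1 / ((k : ℝ) + 1)) atTop (𝓝[>] 0) :=
    tendsto_nhdsWithin_iff.2 ⟨tendsto_one_div_add_atTop_nhds_zero_nat,
      Eventually.of_forall fun _ => Set.mem_Ioi.2 Nat.one_div_pos_of_nat⟩
  obtain ⟨N, hN⟩ := eventually_atTop.1 (hτ.eventually (hS.and self_mem_nhdsWithin))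
  have ht := hτ.comp (tendsto_add_atTop_nat N)
  refine ⟨fun k => γ (1 / ((k + N : ℕ) + 1)), fun k => 1 / ((k + N : ℕ) + 1),
    fun k => (hN _ (Nat.le_add_left N k)).1, hγ.continuousWithinAt.tendsto.comp ht,
    fun k => (hN _ (Nat.le_add_left N k)).2, tendsto_nhds_of_tendsto_nhdsWithin ht, ?_⟩
  have hslope := ((hasDerivWithinAt_iff_tendsto_slope' (lt_irrefl 0)).1 hγ).comp ht
  simpa [Function.comp_def, slope_def_module] using hslope

end TangentCone

def complementarity : Set (ℝ × ℝ) := {q | 0 ≤ q.1 ∧ 0 ≤ q.2 ∧ q.1 * q.2 = 0}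

theorem isClosed_complementarity : IsClosed complementarity :=
  (isClosed_le continuous_const continuous_fst).inter <|
    (isClosed_le continuous_const continuous_snd).inter <|
      isClosed_eq (continuous_fst.mul continuous_snd) continuous_const

theorem smul_mem_complementarity {c : ℝ} (hc : 0 ≤ c) {q : ℝ × ℝ} (hq : q ∈ complementarity) :
    c • q ∈ complementarity := by
  obtain ⟨h₁, h₂, h₁₂⟩ := hq
  refine ⟨mul_nonneg hc h₁, mul_nonneg hc h₂, ?_⟩
  simp only [Prod.smul_fst, Prod.smul_snd, smul_eq_mul]
  linear_combination c ^ 2 * h₁₂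

theorem mem_complementarity_iff {q : ℝ × ℝ} :
    q ∈ complementarity ↔ q.1 = 0 ∧ 0 ≤ q.2 ∨ 0 ≤ q.1 ∧ q.2 = 0 := by
  obtain ⟨a, b⟩ := q
  simp only [complementarity, Set.mem_ofPred_eq, mul_eq_zero]
  constructor
  · rintro ⟨ha, hb, rfl | rfl⟩ <;> simp [*]
  · rintro (⟨rfl, hb⟩ | ⟨ha, rfl⟩) <;> simp [*]

def mpecFeasibleSet : Set (ℝ × ℝ × ℝ) :=
  {p | (p.2.1, p.1 ^ 2 + p.1 + p.2.1) ∈ complementarity ∧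
    (p.2.2, p.1 ^ 3 + p.2.2) ∈ complementarity}

theorem linearized_of_mem_tangentCone_mpecFeasibleSet {d : ℝ × ℝ × ℝ}
    (hd : d ∈ tangentCone mpecFeasibleSet (0, 0, 0)) :
    (d.2.1, d.1 + d.2.1) ∈ complementarity ∧ d.2.2 = 0 := by
  have hx := hasFDerivAt_fst (𝕜 := ℝ) (p := ((0, 0, 0) : ℝ × ℝ × ℝ))
  have hy₁ := (hasFDerivAt_snd (𝕜 := ℝ) (p := ((0, 0, 0) : ℝ × ℝ × ℝ))).fst
  have hy₂ := (hasFDerivAt_snd (𝕜 := ℝ) (p := ((0, 0, 0) : ℝ × ℝ × ℝ))).snd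
  have hcone : ∀ c : ℝ, 0 < c → ∀ q ∈ complementarity, c • q ∈ complementarity :=
    fun _ hc _ => smul_mem_complementarity hc.le
  have h₁ := (hy₁.prodMk (((hx.pow 2).add hx).add hy₁)).apply_mem_of_mem_tangentCone (by simp)
    (fun _ hp => hp.1) isClosed_complementarity hcone hd
  have h₂ := (hy₂.prodMk ((hx.pow 3).add hy₂)).apply_mem_of_mem_tangentCone (by simp)
    (fun _ hp => hp.2) isClosed_complementarity hcone hd
  refine ⟨by simpa using h₁, ?_⟩
  have h₂' : (d.2.2, d.2.2) ∈ complementarity := by simpa using h₂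
  exact mul_self_eq_zero.1 h₂'.2.2

theorem mk_zero_zero_mem_tangentCone_mpecFeasibleSet {a : ℝ} (ha : 0 ≤ a) :
    (a, 0, 0) ∈ tangentCone mpecFeasibleSet (0, 0, 0) := by
  have hS : ∀ᶠ t in 𝓝[>] 0, ((a * t, 0, 0) : ℝ × ℝ × ℝ) ∈ mpecFeasibleSet := by
    filter_upwards [self_mem_nhdsWithin] with t (ht : 0 < t)
    exact ⟨⟨le_rfl, by positivity, zero_mul _⟩, ⟨le_rfl, by positivity, zero_mul _⟩⟩
  have hγ := ((hasDerivAt_id (0 : ℝ)).const_mul a).prodMk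
    ((hasDerivAt_const (0 : ℝ) (0 : ℝ)).prodMk (hasDerivAt_const (0 : ℝ) (0 : ℝ)))
  simpa using mem_tangentCone_of_hasDerivWithinAt (by simp) hS hγ.hasDerivWithinAt

theorem mk_neg_self_zero_mem_tangentCone_mpecFeasibleSet {a : ℝ} (ha : 0 ≤ a) :
    (-a, a, 0) ∈ tangentCone mpecFeasibleSet (0, 0, 0) := by
  have hsmall : ∀ᶠ t in 𝓝[>] (0 : ℝ), a * t < 1 :=
    nhdsWithin_le_nhds <| (continuous_const.mul continuous_id).tendsto' 0 0 (by simp)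
      |>.eventually (gt_mem_nhds one_pos)
  have hS : ∀ᶠ t in 𝓝[>] 0,
      ((-(a * t), a * t - (a * t) ^ 2, (a * t) ^ 3) : ℝ × ℝ × ℝ) ∈ mpecFeasibleSet := by
    filter_upwards [self_mem_nhdsWithin, hsmall] with t (ht : 0 < t) hat
    have hat₀ : 0 ≤ a * t := by positivity
    exact ⟨⟨by nlinarith, le_of_eq (by ring), by ring⟩,
      ⟨by positivity, le_of_eq (by ring), by ring⟩⟩
  have hs := (hasDerivAt_id (0 : ℝ)).const_mul a
  have hγ := hs.neg.prodMk ((hs.sub (hs.pow 2)).prodMk (hs.pow 3))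
  simpa using mem_tangentCone_of_hasDerivWithinAt (by ext <;> simp) hS hγ.hasDerivWithinAt

/-- The tangent cone at the origin to the feasible set of the MPEC with lower-level
complementarity system `0 ≤ y₁ ⟂ x² + x + y₁ ≥ 0`, `0 ≤ y₂ ⟂ x³ + y₂ ≥ 0` is the
nonconvex union of two rays. -/
theorem stmt_11
    (Feas : Set (ℝ × ℝ × ℝ))
    (hFeas : Feas = {p : ℝ × ℝ × ℝ |
      0 ≤ p.2.1 ∧ 0 ≤ p.1 ^ 2 + p.1 + p.2.1 ∧ p.2.1 * (p.1 ^ 2 + p.1 + p.2.1) = 0 ∧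
      0 ≤ p.2.2 ∧ 0 ≤ p.1 ^ 3 + p.2.2 ∧ p.2.2 * (p.1 ^ 3 + p.2.2) = 0}) :
    tangentCone Feas (0, 0, 0) =
      {d : ℝ × ℝ × ℝ | ∃ a : ℝ, 0 ≤ a ∧ d = (a, 0, 0)} ∪
      {d : ℝ × ℝ × ℝ | ∃ a : ℝ, 0 ≤ a ∧ d = (-a, a, 0)} := by
  obtain rfl : Feas = mpecFeasibleSet := by
    rw [hFeas]
    ext p
    simp only [mpecFeasibleSet, complementarity, Set.mem_ofPred_eq, and_assoc]
  ext d
  constructor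
  · intro hd
    obtain ⟨h₁, h₃⟩ := linearized_of_mem_tangentCone_mpecFeasibleSet hd
    rcases mem_complementarity_iff.1 h₁ with ⟨h₂, h₁₂⟩ | ⟨h₂, h₁₂⟩
    · exact .inl ⟨d.1, by linarith, Prod.ext rfl (Prod.ext h₂ h₃)⟩
    · exact .inr ⟨d.2.1, h₂, Prod.ext (by linarith) (Prod.ext rfl h₃)⟩
  · rintro (⟨a, ha, rfl⟩ | ⟨a, ha, rfl⟩)
    exacts [mk_zero_zero_mem_tangentCone_mpecFeasibleSet ha,
      mk_neg_self_zero_mem_tangentCone_mpecFeasibleSet ha]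
end
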